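/- Every cycle has at least 4 turns; consequently, if a region P admits a cycle cover with t turns, then P admits a tour with at most (3/2)·t turns. -/

import Mathlib

/-- A pixel is a point of `ℤ × ℤ`. -/
abbrev Pixel : Type := ℤ × ℤ

/-- Two pixels are adjacent if their ℓ¹-distance is 1. -/
def Adjacent (p q : Pixel) : Prop := |p.1 - q.1| + |p.2 - q.2| = 1

/-- A cycle: a cyclic sequence of `k ≥ 2` pixels (encoded as a `k`-periodic
function on `ℤ`) in which consecutive pixels are adjacent. -/
structure GridCycle where
  k : ℕ
  two_le : 2 ≤ k
  pts : ℤ → Pixel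
  periodic : ∀ i : ℤ, pts (i + k) = pts i
  adj : ∀ i : ℤ, Adjacent (pts i) (pts (i + 1))

/-- The set of pixels covered by a cycle. -/
def GridCycle.covers (C : GridCycle) : Set Pixel := Set.range C.pts

/-- Turn cost at position `i`: 0 if the walk goes straight, 2 for a U-turn,
1 for a 90° turn. -/
def GridCycle.turnCost (C : GridCycle) (i : ℤ) : ℕ :=
  if C.pts (i + 1) - C.pts i = C.pts i - C.pts (i - 1) then 0
  else if C.pts (i + 1) - C.pts i = -(C.pts i - C.pts (i - 1)) then 2
  else 1

/-- The number of turns of a cycle: total turn cost over all positions. -/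
def GridCycle.turns (C : GridCycle) : ℕ :=
  ∑ i ∈ Finset.range C.k, C.turnCost (i : ℤ)

/-- A set of pixels is connected under adjacency. -/
def ConnectedIn (P : Set Pixel) : Prop :=
  ∀ p ∈ P, ∀ q ∈ P, Relation.ReflTransGen (fun a b => b ∈ P ∧ Adjacent a b) p q

/-- A region is a finite nonempty set of pixels connected under adjacency. -/
def IsRegion (P : Set Pixel) : Prop := P.Finite ∧ P.Nonempty ∧ ConnectedIn P

/-- A tour of `P`: a cycle whose pixels lie in `P` covering every pixel of `P`. -/
def IsTour (P : Set Pixel) (C : GridCycle) : Prop := C.covers = P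

/-- A cycle cover of `P`: a finite collection of cycles with pixels in `P`
covering every pixel of `P`. -/
def IsCycleCover (P : Set Pixel) (CC : List GridCycle) : Prop :=
  (∀ C ∈ CC, C.covers ⊆ P) ∧ ∀ p ∈ P, ∃ C ∈ CC, p ∈ C.covers

/-- The number of turns of a cycle cover. -/
def coverTurns (CC : List GridCycle) : ℕ := (CC.map GridCycle.turns).sum

/-- A horizontal strip of `P`: a maximal horizontal run of pixels of `P`. -/
def IsHStrip (P S : Set Pixel) : Prop :=
  ∃ x y : ℤ, ∃ ℓ : ℕ, S = {p : Pixel | p.2 = y ∧ x ≤ p.1 ∧ p.1 ≤ x + (ℓ : ℤ)} ∧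
    S ⊆ P ∧ (x - 1, y) ∉ P ∧ (x + (ℓ : ℤ) + 1, y) ∉ P

/-- A vertical strip of `P`: a maximal vertical run of pixels of `P`. -/
def IsVStrip (P S : Set Pixel) : Prop :=
  ∃ x y : ℤ, ∃ ℓ : ℕ, S = {p : Pixel | p.1 = x ∧ y ≤ p.2 ∧ p.2 ≤ y + (ℓ : ℤ)} ∧
    S ⊆ P ∧ (x, y - 1) ∉ P ∧ (x, y + (ℓ : ℤ) + 1) ∉ P

/-- A strip of `P` is a horizontal or vertical strip. -/
def IsStrip (P S : Set Pixel) : Prop := IsHStrip P S ∨ IsVStrip P S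

/-- A strip cover of `P`: a set of strips of `P` whose union is `P`. -/
def IsStripCover (P : Set Pixel) (F : Set (Set Pixel)) : Prop :=
  (∀ S ∈ F, IsStrip P S) ∧ ⋃₀ F = P

/-- The minimum size of a strip cover of `P`. -/
noncomputable def minStripCover (P : Set Pixel) : ℕ :=
  sInf {m | ∃ F, IsStripCover P F ∧ F.ncard = m}

/-- A rook placement in `P`: a subset of `P` no two distinct elements of which
lie in a common strip of `P`. -/
def IsRookPlacement (P R : Set Pixel) : Prop :=
  R ⊆ P ∧ ∀ p ∈ R, ∀ q ∈ R, p ≠ q → ¬∃ S, IsStrip P S ∧ p ∈ S ∧ q ∈ S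

/-- A maximal rook placement: every pixel of `P` lies in a common strip with
some element of `R`. -/
def IsMaximalRookPlacement (P R : Set Pixel) : Prop :=
  IsRookPlacement P R ∧ ∀ p ∈ P, ∃ r ∈ R, ∃ S, IsStrip P S ∧ p ∈ S ∧ r ∈ S

/-!
Measured by `bend`, the turn cost of a pair of consecutive steps is the distance between their
directions in the 4-cycle of unit directions. The steps of a cycle sum to zero, so some step
points against the first one; getting there and back costs at least 2 + 2 turns.

For the tour, touching cycles of the cover are merged one at a time, each merge costing at most
two extra turns. Cycles through a common pixel are spliced there, in one of the two orientations
of the second cycle. Cycles with adjacent pixels `p`, `q` are joined through the detour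
`p → q → p`; this is cheap unless both cycles run straight and parallel at `p` and `q`, which an
extremal choice of the pair rules out. By connectedness the `m` cycles of a cover with `t` turns
merge into a tour with at most `t + 2(m - 1)` turns, and `t ≥ 4m`.
-/

def unitDirs : Finset Pixel := {(1, 0), (-1, 0), (0, 1), (0, -1)}

lemma adjacent_iff_sub_mem_unitDirs {p q : Pixel} : Adjacent p q ↔ q - p ∈ unitDirs := by
  obtain ⟨a, b⟩ := p
  obtain ⟨c, d⟩ := q
  simp only [Adjacent, unitDirs, Finset.mem_insert, Finset.mem_singleton, Prod.mk_sub_mk,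
    Prod.mk.injEq]
  rcases abs_cases (a - c) with ⟨h₁, _⟩ | ⟨h₁, _⟩ <;>
    rcases abs_cases (b - d) with ⟨h₂, _⟩ | ⟨h₂, _⟩ <;> omega

lemma neg_mem_unitDirs {u : Pixel} (hu : u ∈ unitDirs) : -u ∈ unitDirs := by
  revert u; decide

lemma Adjacent.symm {p q : Pixel} (h : Adjacent p q) : Adjacent q p := by
  rw [adjacent_iff_sub_mem_unitDirs] at h ⊢
  simpa using neg_mem_unitDirs h

lemma Adjacent.add_right {p q : Pixel} (h : Adjacent p q) (s : Pixel) :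
    Adjacent (p + s) (q + s) := by
  rwa [adjacent_iff_sub_mem_unitDirs, add_sub_add_right_eq_sub, ← adjacent_iff_sub_mem_unitDirs]

/-- The turn cost between consecutive steps in directions `u` and `v`. -/
def bend (u v : Pixel) : ℕ := if v = u then 0 else if v = -u then 2 else 1

lemma bend_triangle (u v w : Pixel) : bend u w ≤ bend u v + bend v w := by
  unfold bend
  split_ifs <;> first | omega | grind

lemma bend_neg_neg (u v : Pixel) : bend (-u) (-v) = bend u v := by
  simp only [bend, neg_neg, neg_eq_iff_eq_neg]

lemma bend_comm (u v : Pixel) : bend u v = bend v u := by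
  simp only [bend, eq_comm (a := u), neg_eq_iff_eq_neg (a := v)]

lemma bend_neg_right {u : Pixel} (hu : u ∈ unitDirs) : bend u (-u) = 2 := by
  revert u; decide

lemma bend_neg_left {u : Pixel} (hu : u ∈ unitDirs) : bend (-u) u = 2 := by
  rw [bend_comm, bend_neg_right hu]

lemma dot_nonneg_of_ne_neg {e u : Pixel} (he : e ∈ unitDirs) (hu : u ∈ unitDirs) (h : u ≠ -e) :
    0 ≤ e.1 * u.1 + e.2 * u.2 := by
  revert u; revert e; decide

lemma dot_self_of_mem_unitDirs {e : Pixel} (he : e ∈ unitDirs) : e.1 * e.1 + e.2 * e.2 = 1 := by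
  revert e; decide

lemma bend_le_sum_range (d : ℕ → Pixel) (a m : ℕ) :
    bend (d a) (d (a + m)) ≤ ∑ n ∈ Finset.range m, bend (d (a + n)) (d (a + n + 1)) := by
  induction m with
  | zero => simp [bend]
  | succ m ih =>
    rw [Finset.sum_range_succ, ← add_assoc]
    exact (bend_triangle _ (d (a + m)) _).trans (by omega)

theorem Function.Periodic.sum_range_add {M : Type*} [AddCancelCommMonoid M] {f : ℤ → M} {k : ℕ}
    (hf : Function.Periodic f k) (a : ℤ) :
    ∑ n ∈ Finset.range k, f (a + n) = ∑ n ∈ Finset.range k, f n := by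
  have step : ∀ b : ℤ, ∑ n ∈ Finset.range k, f (b + 1 + n) = ∑ n ∈ Finset.range k, f (b + n) := by
    intro b
    have h := (Finset.sum_range_succ' (fun n => f (b + n)) k).symm.trans
      (Finset.sum_range_succ (fun n => f (b + n)) k)
    simp only [Nat.cast_add, Nat.cast_one, Nat.cast_zero, add_zero, hf b] at h
    simpa only [add_assoc, add_comm (1 : ℤ)] using add_right_cancel h
  induction a using Int.induction_on with
  | zero => simp
  | succ b ih => rw [step, ih]
  | pred b ih => rw [← ih, ← step, sub_add_cancel]

lemma sum_range_add_add_eq_of_forall {f g : ℤ → ℕ} {k : ℕ} (hk : 0 < k) (a b : ℤ)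
    (h : ∀ n : ℕ, 0 < n → n < k → g (b + n) = f (a + n)) :
    ∑ n ∈ Finset.range k, g (b + n) + f a = ∑ n ∈ Finset.range k, f (a + n) + g b := by
  obtain ⟨k, rfl⟩ : ∃ k', k = k' + 1 := ⟨k - 1, by omega⟩
  simp only [Finset.sum_range_succ' _ k, Nat.cast_zero, add_zero]
  rw [Finset.sum_congr rfl fun n hn => h (n + 1) n.succ_pos (by simpa using hn)]
  ac_rfl

-- The turn costs at a splice point, for either orientation of the second cycle.
lemma bend_exchange_le {a₁ a₂ b₁ b₂ : Pixel} (ha₁ : a₁ ∈ unitDirs)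
    (ha₂ : a₂ ∈ unitDirs) (hb₁ : b₁ ∈ unitDirs) (hb₂ : b₂ ∈ unitDirs) :
    bend b₁ a₂ + bend a₁ b₂ ≤ bend a₁ a₂ + bend b₁ b₂ + 2 ∨
      bend (-b₂) a₂ + bend a₁ (-b₁) ≤ bend a₁ a₂ + bend b₁ b₂ + 2 := by
  revert b₂; revert b₁; revert a₂; revert a₁; decide

-- The turn costs at the ends of a detour `p → p + w → p`; the exception is the parallel case.
lemma bend_detour_le_or_parallel {w a₁ a₂ b₁ b₂ : Pixel} (hw : w ∈ unitDirs)
    (ha₁ : a₁ ∈ unitDirs) (ha₂ : a₂ ∈ unitDirs) (hb₁ : b₁ ∈ unitDirs) (hb₂ : b₂ ∈ unitDirs)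
    (h₁ : a₁ ≠ -w) (h₂ : a₂ ≠ w) (h₃ : b₁ ≠ w) (h₄ : b₂ ≠ -w) :
    bend a₁ w + bend (-w) a₂ + bend b₁ (-w) + bend w b₂ ≤ bend a₁ a₂ + bend b₁ b₂ + 2 ∨
      a₁ = a₂ ∧ b₁ = b₂ ∧ (b₂ = a₂ ∨ b₂ = -a₂) := by
  revert b₂; revert b₁; revert a₂; revert a₁; revert w; decide

lemma fst_add_two_mul_snd_ne_zero {u : Pixel} (hu : u ∈ unitDirs) : u.1 + 2 * u.2 ≠ 0 := by
  revert u; decide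

namespace GridCycle

variable (C : GridCycle)

lemma periodic_pts : Function.Periodic C.pts C.k := C.periodic

def dir (n : ℤ) : Pixel := C.pts (n + 1) - C.pts n

lemma dir_mem_unitDirs (n : ℤ) : C.dir n ∈ unitDirs :=
  adjacent_iff_sub_mem_unitDirs.mp (C.adj n)

lemma periodic_dir : Function.Periodic C.dir C.k := fun n => by
  rw [dir, add_right_comm, C.periodic, C.periodic, dir]

lemma turnCost_eq_bend (i : ℤ) : C.turnCost i = bend (C.dir (i - 1)) (C.dir i) := by
  simp only [turnCost, bend, dir, sub_add_cancel]

lemma periodic_turnCost : Function.Periodic C.turnCost C.k := fun i => by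
  rw [turnCost_eq_bend, turnCost_eq_bend, show i + C.k - 1 = i - 1 + C.k by ring,
    C.periodic_dir, C.periodic_dir]

lemma turns_eq_sum_add (a : ℤ) : C.turns = ∑ n ∈ Finset.range C.k, C.turnCost (a + n) :=
  (C.periodic_turnCost.sum_range_add a).symm

lemma turns_eq_sum_bend :
    C.turns = ∑ n ∈ Finset.range C.k, bend (C.dir n) (C.dir (n + 1 : ℕ)) := by
  rw [C.turns_eq_sum_add 1]
  refine Finset.sum_congr rfl fun n _ => ?_
  rw [turnCost_eq_bend]
  push_cast
  ring_nf

lemma sum_dir : ∑ n ∈ Finset.range C.k, C.dir n = 0 := by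
  have h := Finset.sum_range_sub (fun n : ℕ => C.pts n) C.k
  simp only [Nat.cast_add, Nat.cast_one, Nat.cast_zero] at h
  rw [← zero_add (C.k : ℤ), C.periodic, sub_self] at h
  exact h

lemma exists_dir_eq_neg : ∃ n < C.k, C.dir n = -C.dir 0 := by
  by_contra! hne
  set e := C.dir 0 with he_def
  have he := C.dir_mem_unitDirs 0
  let dot (u : Pixel) : ℤ := e.1 * u.1 + e.2 * u.2
  have hsum : ∑ n ∈ Finset.range C.k, dot (C.dir n) = 0 := by
    simp only [dot, ← Finset.mul_sum, Finset.sum_add_distrib, ← Prod.fst_sum, ← Prod.snd_sum,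
      sum_dir, Prod.fst_zero, Prod.snd_zero, mul_zero, add_zero]
  have h0 : 0 ∈ Finset.range C.k := Finset.mem_range.mpr (by have := C.two_le; omega)
  have := Finset.single_le_sum (f := fun n : ℕ => dot (C.dir n))
    (fun n hn => dot_nonneg_of_ne_neg he (C.dir_mem_unitDirs n) (hne n (Finset.mem_range.mp hn))) h0
  simp only [Nat.cast_zero, hsum, dot, ← he_def] at this
  linarith [dot_self_of_mem_unitDirs he]

theorem four_le_turns : 4 ≤ C.turns := by
  obtain ⟨n₁, hn₁, hdir⟩ := C.exists_dir_eq_neg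
  have he := C.dir_mem_unitDirs 0
  obtain ⟨b, hb⟩ := Nat.exists_eq_add_of_lt hn₁
  let d (n : ℕ) : Pixel := C.dir n
  have first_half : 2 ≤ ∑ n ∈ Finset.range n₁, bend (d n) (d (n + 1)) := by
    simpa [d, hdir, bend_neg_right he] using bend_le_sum_range d 0 n₁
  have second_half : 2 ≤ ∑ n ∈ Finset.range (b + 1), bend (d (n₁ + n)) (d (n₁ + n + 1)) := by
    have hend : d (n₁ + (b + 1)) = C.dir 0 := by
      simpa [d, ← add_assoc, ← hb] using C.periodic_dir 0
    simpa [d, hdir, hend, bend_neg_left he] using bend_le_sum_range d n₁ (b + 1)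
  rw [turns_eq_sum_bend, hb, add_assoc, Finset.sum_range_add]
  exact le_trans (by omega) (add_le_add first_half second_half)

lemma pts_add_emod (a n : ℤ) : C.pts (a + n % C.k) = C.pts (a + n) := by
  have h := C.periodic_pts.sub_int_mul_eq (x := a + n) (n / C.k)
  rw [Int.cast_id] at h
  rw [Int.emod_def, ← add_sub_assoc, mul_comm, h]

lemma pts_add_one (n : ℤ) : C.pts (n + 1) = C.pts n + C.dir n := by
  rw [dir, add_sub_cancel]

lemma pts_sub_one (n : ℤ) : C.pts (n - 1) = C.pts n - C.dir (n - 1) := by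
  rw [dir, sub_add_cancel, sub_sub_cancel]

def ofClosedWalk (k : ℕ) (hk : 2 ≤ k) (f : ℤ → Pixel) (hclosed : f k = f 0)
    (hadj : ∀ n : ℤ, 0 ≤ n → n < k → Adjacent (f n) (f (n + 1))) : GridCycle where
  k := k
  two_le := hk
  pts n := f (n % k)
  periodic n := by rw [Int.add_emod_right]
  adj n := by
    have hk0 : (0 : ℤ) < k := by omega
    have h0 := Int.emod_nonneg n hk0.ne'
    have h1 := Int.emod_lt_of_pos n hk0
    rw [← Int.emod_add_emod]
    rcases (show n % k + 1 < k ∨ n % k + 1 = k by omega) with hlt | heq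
    · rw [Int.emod_eq_of_lt (by omega) hlt]
      exact hadj _ h0 h1
    · have h := hadj _ h0 h1
      rw [heq] at h
      rwa [heq, Int.emod_self, ← hclosed]

section ClosedWalk

variable {k : ℕ} {hk : 2 ≤ k} {f : ℤ → Pixel} {hclosed : f k = f 0}
  {hadj : ∀ n : ℤ, 0 ≤ n → n < k → Adjacent (f n) (f (n + 1))}

lemma ofClosedWalk_pts {n : ℤ} (h0 : 0 ≤ n) (h1 : n ≤ k) :
    (ofClosedWalk k hk f hclosed hadj).pts n = f n := by
  change f (n % k) = f n
  rcases h1.lt_or_eq with hlt | rfl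
  · rw [Int.emod_eq_of_lt h0 hlt]
  · rw [Int.emod_self, hclosed]

lemma ofClosedWalk_dir {n : ℤ} (h0 : 0 ≤ n) (h1 : n < k) :
    (ofClosedWalk k hk f hclosed hadj).dir n = f (n + 1) - f n := by
  rw [dir, ofClosedWalk_pts (by omega) h1, ofClosedWalk_pts h0 h1.le]

lemma ofClosedWalk_covers :
    (ofClosedWalk k hk f hclosed hadj).covers = f '' Set.Ico 0 k := by
  have hk0 : (0 : ℤ) < k := by omega
  ext p
  constructor
  · rintro ⟨n, rfl⟩
    exact ⟨n % k, ⟨Int.emod_nonneg n hk0.ne', Int.emod_lt_of_pos n hk0⟩, rfl⟩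
  · rintro ⟨n, ⟨h0, h1⟩, rfl⟩
    exact ⟨n, ofClosedWalk_pts h0 h1.le⟩

end ClosedWalk

section Splice

variable {A B : GridCycle} {i j : ℤ}

def spliceWalk (A B : GridCycle) (i j n : ℤ) : Pixel :=
  if n ≤ A.k then A.pts (i + n) else B.pts (j + n - A.k)

lemma spliceWalk_of_le {n : ℤ} (h : n ≤ A.k) : spliceWalk A B i j n = A.pts (i + n) :=
  if_pos h

lemma spliceWalk_of_ge (hij : A.pts i = B.pts j) {n : ℤ} (h : A.k ≤ n) :
    spliceWalk A B i j n = B.pts (j + n - A.k) := by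
  rcases h.lt_or_eq with hlt | rfl
  · exact if_neg (not_le.mpr hlt)
  · rw [spliceWalk_of_le le_rfl, add_sub_cancel_right, A.periodic, hij]

def splice (hij : A.pts i = B.pts j) : GridCycle :=
  ofClosedWalk (A.k + B.k) (by have := A.two_le; omega) (spliceWalk A B i j)
    (by
      rw [spliceWalk_of_ge hij (by push_cast; omega), spliceWalk_of_le (by simp),
        add_zero, hij]
      push_cast
      rw [show j + (A.k + B.k) - A.k = j + B.k by ring, B.periodic])
    (fun n h0 h1 => by
      by_cases hn : n + 1 ≤ A.k
      · rw [spliceWalk_of_le (by omega), spliceWalk_of_le hn, ← add_assoc]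
        exact A.adj _
      · push_cast at h1
        rw [spliceWalk_of_ge hij (by omega), spliceWalk_of_ge hij (by omega),
          show j + (n + 1) - A.k = j + n - A.k + 1 by ring]
        exact B.adj _)

variable (hij : A.pts i = B.pts j)

lemma splice_k : (splice hij).k = A.k + B.k := rfl

lemma splice_pts_of_le {n : ℤ} (h0 : 0 ≤ n) (h1 : n ≤ A.k) :
    (splice hij).pts n = A.pts (i + n) := by
  rw [splice, ofClosedWalk_pts h0 (by push_cast; omega), spliceWalk_of_le h1]

lemma splice_dir_of_lt {n : ℤ} (h0 : 0 ≤ n) (h1 : n < A.k) :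
    (splice hij).dir n = A.dir (i + n) := by
  rw [splice, ofClosedWalk_dir h0 (by push_cast; omega), spliceWalk_of_le h1.le,
    spliceWalk_of_le (by omega), dir, add_assoc]

lemma splice_dir_of_ge {n : ℤ} (h0 : A.k ≤ n) (h1 : n < A.k + B.k) :
    (splice hij).dir n = B.dir (j + n - A.k) := by
  rw [splice, ofClosedWalk_dir (by omega) (by push_cast; omega), spliceWalk_of_ge hij h0,
    spliceWalk_of_ge hij (by omega), dir, show j + (n + 1) - A.k = j + n - A.k + 1 by ring]

lemma splice_covers : (splice hij).covers = A.covers ∪ B.covers := by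
  have hA : (0 : ℤ) < A.k := by have := A.two_le; omega
  have hB : (0 : ℤ) < B.k := by have := B.two_le; omega
  rw [splice, ofClosedWalk_covers]
  ext p
  constructor
  · rintro ⟨n, -, rfl⟩
    by_cases hn : n ≤ A.k
    · exact Or.inl ⟨_, (spliceWalk_of_le hn).symm⟩
    · exact Or.inr ⟨_, (spliceWalk_of_ge hij (by omega)).symm⟩
  · rintro (⟨t, rfl⟩ | ⟨t, rfl⟩)
    · have h0 := Int.emod_nonneg (t - i) hA.ne'
      have h1 := Int.emod_lt_of_pos (t - i) hA
      refine ⟨(t - i) % A.k, ⟨h0, by push_cast; omega⟩, ?_⟩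
      rw [spliceWalk_of_le h1.le, A.pts_add_emod, add_sub_cancel]
    · have h0 := Int.emod_nonneg (t - j) hB.ne'
      have h1 := Int.emod_lt_of_pos (t - j) hB
      refine ⟨A.k + (t - j) % B.k, ⟨by omega, by push_cast; omega⟩, ?_⟩
      rw [spliceWalk_of_ge hij (by omega), add_sub_assoc, add_sub_cancel_left, B.pts_add_emod,
        add_sub_cancel]

lemma splice_turnCost_zero : (splice hij).turnCost 0 = bend (B.dir (j - 1)) (A.dir i) := by
  have hA := A.two_le
  have hB := B.two_le
  have hK : (((splice hij).k : ℕ) : ℤ) = A.k + B.k := by rw [splice_k]; push_cast; rfl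
  rw [turnCost_eq_bend, ← (splice hij).periodic_dir, hK, splice_dir_of_ge hij (by omega) (by omega),
    splice_dir_of_lt hij le_rfl (by omega), add_zero,
    show j + (0 - 1 + (A.k + B.k)) - A.k = j - 1 + B.k by ring, B.periodic_dir]

lemma splice_turnCost_k : (splice hij).turnCost A.k = bend (A.dir (i - 1)) (B.dir j) := by
  have hA := A.two_le
  have hB := B.two_le
  rw [turnCost_eq_bend, splice_dir_of_lt hij (by omega) (by omega),
    splice_dir_of_ge hij le_rfl (by omega), show i + (A.k - 1) = i - 1 + A.k by ring,
    A.periodic_dir, add_sub_cancel_right]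

lemma splice_turnCost_of_lt {n : ℤ} (h0 : 1 ≤ n) (h1 : n < A.k) :
    (splice hij).turnCost n = A.turnCost (i + n) := by
  rw [turnCost_eq_bend, turnCost_eq_bend, splice_dir_of_lt hij (by omega) (by omega),
    splice_dir_of_lt hij (by omega) h1, add_sub_assoc]

lemma splice_turnCost_of_gt {n : ℤ} (h0 : A.k < n) (h1 : n < A.k + B.k) :
    (splice hij).turnCost n = B.turnCost (j + n - A.k) := by
  rw [turnCost_eq_bend, turnCost_eq_bend, splice_dir_of_ge hij (by omega) (by omega),
    splice_dir_of_ge hij h0.le h1, show j + (n - 1) - A.k = j + n - A.k - 1 by ring]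

lemma turns_splice :
    (splice hij).turns + A.turnCost i + B.turnCost j =
      A.turns + B.turns + bend (B.dir (j - 1)) (A.dir i) + bend (A.dir (i - 1)) (B.dir j) := by
  have hA := A.two_le
  have hB := B.two_le
  have first := sum_range_add_add_eq_of_forall (g := (splice hij).turnCost) (f := A.turnCost)
    (k := A.k) (by omega) i 0 fun n h0 h1 => by
      rw [zero_add]; exact splice_turnCost_of_lt hij (by omega) (by omega)
  have second := sum_range_add_add_eq_of_forall (g := (splice hij).turnCost) (f := B.turnCost)
    (k := B.k) (by omega) j A.k fun n h0 h1 => by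
      rw [splice_turnCost_of_gt hij (by omega) (by omega), add_left_comm, add_sub_cancel_left]
  simp only [zero_add, ← turns_eq_sum_add, splice_turnCost_zero, splice_turnCost_k] at first second
  rw [turns, splice_k, Finset.sum_range_add]
  push_cast
  omega

end Splice

def rev : GridCycle where
  k := C.k
  two_le := C.two_le
  pts n := C.pts (-n)
  periodic n := by rw [neg_add', C.periodic_pts.sub_eq]
  adj n := by
    have h := (C.adj (-n - 1)).symm
    rwa [sub_add_cancel, ← neg_add'] at h

lemma rev_pts (n : ℤ) : C.rev.pts n = C.pts (-n) := rfl

lemma rev_covers : C.rev.covers = C.covers :=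
  neg_surjective.range_comp C.pts

lemma rev_dir (n : ℤ) : C.rev.dir n = -C.dir (-n - 1) := by
  rw [dir, dir, rev_pts, rev_pts, sub_add_cancel, neg_add', neg_sub]

lemma rev_turnCost (n : ℤ) : C.rev.turnCost n = C.turnCost (-n) := by
  rw [turnCost_eq_bend, turnCost_eq_bend, rev_dir, rev_dir, bend_neg_neg, bend_comm,
    show -(n - 1) - 1 = -n by ring]

lemma turns_rev : C.rev.turns = C.turns := by
  have h2 := C.two_le
  rw [turns, show C.rev.k = C.k from rfl, C.turns_eq_sum_add (1 - C.k),
    ← Finset.sum_range_reflect]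
  refine Finset.sum_congr rfl fun n hn => ?_
  have hn := Finset.mem_range.mp hn
  rw [rev_turnCost, show -((C.k - 1 - n : ℕ) : ℤ) = 1 - C.k + n by omega]

section TwoCycle

variable {p q : Pixel} (hpq : Adjacent p q)

def twoCycle : GridCycle :=
  ofClosedWalk 2 le_rfl (fun n => if n = 1 then q else p) (by simp) fun n h0 h1 => by
    obtain rfl | rfl : n = 0 ∨ n = 1 := by omega
    · simpa using hpq
    · simpa using hpq.symm

lemma twoCycle_pts_one : (twoCycle hpq).pts 1 = q := by
  rw [twoCycle, ofClosedWalk_pts] <;> simp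

lemma twoCycle_pts_two : (twoCycle hpq).pts 2 = p := by
  rw [twoCycle, ofClosedWalk_pts] <;> simp

lemma twoCycle_dir_zero : (twoCycle hpq).dir 0 = q - p := by
  rw [twoCycle, ofClosedWalk_dir] <;> simp

lemma twoCycle_dir_one : (twoCycle hpq).dir 1 = -(q - p) := by
  rw [twoCycle, ofClosedWalk_dir] <;> simp

lemma twoCycle_covers : (twoCycle hpq).covers ⊆ {p, q} := by
  rw [twoCycle, ofClosedWalk_covers]
  rintro _ ⟨n, -, rfl⟩
  dsimp only
  split_ifs <;> simp

lemma twoCycle_turnCost_one : (twoCycle hpq).turnCost 1 = 2 := by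
  rw [turnCost_eq_bend, sub_self, twoCycle_dir_zero, twoCycle_dir_one,
    bend_neg_right (adjacent_iff_sub_mem_unitDirs.mp hpq)]

lemma twoCycle_turns : (twoCycle hpq).turns = 4 := by
  have hdir : (twoCycle hpq).dir (-1) = -(q - p) := by
    rw [← twoCycle_dir_one hpq, ← (twoCycle hpq).periodic_dir]
    rfl
  rw [turns, show (twoCycle hpq).k = 2 from rfl, Finset.sum_range_succ, Finset.sum_range_one,
    Nat.cast_zero, Nat.cast_one, twoCycle_turnCost_one, turnCost_eq_bend, zero_sub, hdir,
    twoCycle_dir_zero, bend_neg_left (adjacent_iff_sub_mem_unitDirs.mp hpq)]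

end TwoCycle

section Bridge

variable {A B : GridCycle} {i j : ℤ} (hadj : Adjacent (A.pts i) (B.pts j))

def detour : GridCycle := splice (twoCycle_pts_one hadj)

lemma detour_pts_one : (detour hadj).pts 1 = A.pts i := by
  rw [detour, splice_pts_of_le _ zero_le_one (by simp [twoCycle, ofClosedWalk]),
    show (1 : ℤ) + 1 = 2 by norm_num, twoCycle_pts_two]

/-- The cycle that runs once around `A` from position `i`, steps to `B.pts j`, runs once
around `B` and steps back. -/
def bridge : GridCycle := splice (detour_pts_one hadj).symm

lemma bridge_covers : (bridge hadj).covers = A.covers ∪ B.covers := by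
  have htwo : (twoCycle hadj).covers ⊆ A.covers ∪ B.covers :=
    (twoCycle_covers hadj).trans <| Set.insert_subset (Or.inl ⟨i, rfl⟩) <|
      Set.singleton_subset_iff.mpr (Or.inr ⟨j, rfl⟩)
  rw [bridge, splice_covers, detour, splice_covers]
  exact le_antisymm
    (Set.union_subset Set.subset_union_left (Set.union_subset htwo Set.subset_union_right))
    (Set.union_subset_union_right _ Set.subset_union_right)

lemma turns_bridge :
    (bridge hadj).turns + A.turnCost i + B.turnCost j =
      A.turns + B.turns + bend (A.dir (i - 1)) (B.pts j - A.pts i) +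
        bend (-(B.pts j - A.pts i)) (A.dir i) + bend (B.dir (j - 1)) (-(B.pts j - A.pts i)) +
        bend (B.pts j - A.pts i) (B.dir j) := by
  have hw := adjacent_iff_sub_mem_unitDirs.mp hadj
  have h2 : ((twoCycle hadj).k : ℤ) = 2 := rfl
  have hM0 : (detour hadj).dir 0 = -(B.pts j - A.pts i) := by
    rw [detour, splice_dir_of_lt _ le_rfl (by omega), add_zero, twoCycle_dir_one]
  have hM1 : (detour hadj).dir 1 = B.pts j - A.pts i := by
    rw [detour, splice_dir_of_lt _ zero_le_one (by omega), ← twoCycle_dir_zero hadj,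
      show (1 : ℤ) + 1 = 0 + 2 by norm_num, ← h2, periodic_dir]
  have hMturnCost : (detour hadj).turnCost 1 = 2 := by
    rw [turnCost_eq_bend, sub_self, hM0, hM1, bend_neg_left hw]
  have inner := turns_splice (twoCycle_pts_one hadj)
  have outer := turns_splice (detour_pts_one hadj).symm
  rw [twoCycle_turnCost_one, twoCycle_turns, twoCycle_dir_one, sub_self, twoCycle_dir_zero] at inner
  rw [hMturnCost, sub_self, hM0, hM1] at outer
  rw [← detour] at inner
  rw [bridge]
  omega

end Bridge

lemma covers_finite : C.covers.Finite := by
  have hk : (0 : ℤ) < C.k := by have := C.two_le; omega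
  refine ((Set.finite_Ico (0 : ℤ) C.k).image C.pts).subset ?_
  rintro _ ⟨n, rfl⟩
  refine ⟨n % C.k, ⟨Int.emod_nonneg n hk.ne', Int.emod_lt_of_pos n hk⟩, ?_⟩
  simpa using C.pts_add_emod 0 n

def Mergeable (A B : GridCycle) : Prop :=
  ∃ C : GridCycle, C.covers = A.covers ∪ B.covers ∧ C.turns ≤ A.turns + B.turns + 2

variable {A B : GridCycle}

lemma exists_merge_of_pts_eq {i j : ℤ} (hij : A.pts i = B.pts j) :
    Mergeable A B := by
  rcases bend_exchange_le (A.dir_mem_unitDirs (i - 1)) (A.dir_mem_unitDirs i)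
    (B.dir_mem_unitDirs (j - 1)) (B.dir_mem_unitDirs j) with h | h
  · refine ⟨splice hij, splice_covers hij, ?_⟩
    have := turns_splice hij
    rw [turnCost_eq_bend, turnCost_eq_bend] at this
    omega
  · have hij' : A.pts i = B.rev.pts (-j) := by rw [rev_pts, neg_neg, hij]
    refine ⟨splice hij', by rw [splice_covers, rev_covers], ?_⟩
    have := turns_splice hij'
    rw [turns_rev, rev_turnCost, neg_neg, rev_dir, rev_dir, turnCost_eq_bend, turnCost_eq_bend,
      show -(-j - 1) - 1 = j by ring, show -(-j) - 1 = j - 1 by ring] at this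
    omega

lemma exists_merge_or_parallel (hdisj : Disjoint A.covers B.covers) {i j : ℤ}
    (hadj : Adjacent (A.pts i) (B.pts j)) :
    Mergeable A B ∨
      A.dir (i - 1) = A.dir i ∧ B.dir (j - 1) = B.dir j ∧
        (B.dir j = A.dir i ∨ B.dir j = -A.dir i) := by
  have hne (m n : ℤ) : A.pts m ≠ B.pts n := hdisj.ne_of_mem ⟨m, rfl⟩ ⟨n, rfl⟩
  rcases bend_detour_le_or_parallel (adjacent_iff_sub_mem_unitDirs.mp hadj)
    (A.dir_mem_unitDirs (i - 1)) (A.dir_mem_unitDirs i) (B.dir_mem_unitDirs (j - 1))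
    (B.dir_mem_unitDirs j)
    (fun h => hne (i - 1) j (by rw [pts_sub_one, h]; abel))
    (fun h => hne (i + 1) j (by rw [pts_add_one, h]; abel))
    (fun h => hne i (j - 1) (by rw [pts_sub_one, h]; abel))
    (fun h => hne i (j + 1) (by rw [pts_add_one, h]; abel)) with h | h
  · refine Or.inl ⟨bridge hadj, bridge_covers hadj, ?_⟩
    have := turns_bridge hadj
    rw [turnCost_eq_bend, turnCost_eq_bend] at this
    omega
  · exact Or.inr h

lemma exists_merge_of_adjacent (hdisj : Disjoint A.covers B.covers)
    (h : ∃ p ∈ A.covers, ∃ q ∈ B.covers, Adjacent p q) :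
    Mergeable A B := by
  -- At an adjacent pair maximising a functional that vanishes on no unit direction the cycles
  -- cannot run in parallel: shifting the pair along their common direction would increase it.
  let F (r : Pixel × Pixel) : ℤ := r.1.1 + 2 * r.1.2 + (r.2.1 + 2 * r.2.2)
  let S := {r : Pixel × Pixel | r.1 ∈ A.covers ∧ r.2 ∈ B.covers ∧ Adjacent r.1 r.2}
  have hS : S.Finite :=
    (A.covers_finite.prod B.covers_finite).subset fun r hr => ⟨hr.1, hr.2.1⟩
  obtain ⟨p, hp, q, hq, hpq⟩ := h
  obtain ⟨⟨_, _⟩, ⟨⟨i, rfl⟩, ⟨j, rfl⟩, hadj⟩, hmax⟩ :=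
    Set.exists_max_image S F hS ⟨(p, q), hp, hq, hpq⟩
  refine (exists_merge_or_parallel hdisj hadj).resolve_right ?_
  rintro ⟨ha, hb, hab⟩
  have hB : B.pts j + A.dir i ∈ B.covers ∧ B.pts j - A.dir i ∈ B.covers := by
    rcases hab with h | h
    · exact ⟨⟨j + 1, by rw [pts_add_one, h]⟩, ⟨j - 1, by rw [pts_sub_one, hb, h]⟩⟩
    · exact ⟨⟨j - 1, by rw [pts_sub_one, hb, h, sub_neg_eq_add]⟩,
        ⟨j + 1, by rw [pts_add_one, h, ← sub_eq_add_neg]⟩⟩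
  have hplus := hmax (A.pts i + A.dir i, B.pts j + A.dir i)
    ⟨⟨i + 1, pts_add_one _ _⟩, hB.1, hadj.add_right _⟩
  have hminus := hmax (A.pts i - A.dir i, B.pts j - A.dir i)
    ⟨⟨i - 1, by rw [pts_sub_one, ha]⟩, hB.2, by simpa only [sub_eq_add_neg] using hadj.add_right _⟩
  have := fst_add_two_mul_snd_ne_zero (A.dir_mem_unitDirs i)
  simp only [F, Prod.fst_add, Prod.snd_add, Prod.fst_sub, Prod.snd_sub] at hplus hminus
  omega

def Touches (A B : GridCycle) : Prop :=
  ∃ p ∈ A.covers, ∃ q ∈ B.covers, p = q ∨ Adjacent p q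

theorem exists_merge_of_touches (h : A.Touches B) :
    Mergeable A B := by
  by_cases hdisj : Disjoint A.covers B.covers
  · obtain ⟨p, hp, q, hq, rfl | hpq⟩ := h
    · exact absurd rfl (hdisj.ne_of_mem hp hq)
    · exact exists_merge_of_adjacent hdisj ⟨p, hp, q, hq, hpq⟩
  · obtain ⟨_, ⟨i, rfl⟩, ⟨j, hij⟩⟩ := Set.not_disjoint_iff.mp hdisj
    exact exists_merge_of_pts_eq hij.symm

end GridCycle

def coverUnion (CC : List GridCycle) : Set Pixel := {p | ∃ C ∈ CC, p ∈ C.covers}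

lemma coverUnion_cons (C : GridCycle) (CC : List GridCycle) :
    coverUnion (C :: CC) = C.covers ∪ coverUnion CC := by
  ext p
  simp [coverUnion]

lemma coverUnion_perm {CC CC' : List GridCycle} (h : CC.Perm CC') :
    coverUnion CC = coverUnion CC' := by
  simp only [coverUnion, h.mem_iff]

lemma coverTurns_cons (C : GridCycle) (CC : List GridCycle) :
    coverTurns (C :: CC) = C.turns + coverTurns CC := by
  simp [coverTurns]

lemma exists_touches_of_connectedIn (C₀ : GridCycle) {CC : List GridCycle} (hCC : CC ≠ [])
    (hconn : ConnectedIn (coverUnion (C₀ :: CC))) : ∃ C ∈ CC, C₀.Touches C := by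
  by_contra! hno
  have hp₀ : C₀.pts 0 ∈ coverUnion (C₀ :: CC) := ⟨C₀, List.mem_cons_self, 0, rfl⟩
  have reach (p : Pixel) (hp : Relation.ReflTransGen
      (fun a b => b ∈ coverUnion (C₀ :: CC) ∧ Adjacent a b) (C₀.pts 0) p) : p ∈ C₀.covers := by
    induction hp with
    | refl => exact ⟨0, rfl⟩
    | tail _ hbc ih =>
      obtain ⟨⟨C, hC, hc⟩, hadj⟩ := hbc
      rcases List.mem_cons.mp hC with rfl | hC
      · exact hc
      · exact absurd ⟨_, ih, _, hc, Or.inr hadj⟩ (hno C hC)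
  obtain ⟨C, hC⟩ := List.exists_mem_of_ne_nil CC hCC
  have hq : C.pts 0 ∈ coverUnion (C₀ :: CC) := ⟨C, List.mem_cons_of_mem _ hC, 0, rfl⟩
  exact hno C hC ⟨_, reach _ (hconn _ hp₀ _ hq), _, ⟨0, rfl⟩, Or.inl rfl⟩

theorem exists_cycle_covers_coverUnion (n : ℕ) (CC : List GridCycle) (hlen : CC.length = n + 1)
    (hconn : ConnectedIn (coverUnion CC)) :
    ∃ C : GridCycle, C.covers = coverUnion CC ∧ C.turns ≤ coverTurns CC + 2 * n := by
  induction n generalizing CC with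
  | zero =>
    obtain ⟨C, rfl⟩ := List.length_eq_one_iff.mp hlen
    exact ⟨C, by simp [coverUnion], by simp [coverTurns]⟩
  | succ n ih =>
    classical
    obtain ⟨C₀, CC, rfl⟩ := List.exists_cons_of_length_eq_add_one hlen
    obtain ⟨C, hC, htouch⟩ := exists_touches_of_connectedIn C₀
      (List.ne_nil_of_length_eq_add_one (by simpa using hlen)) hconn
    obtain ⟨D, hD, hDturns⟩ := GridCycle.exists_merge_of_touches htouch
    have hperm := List.perm_cons_erase hC
    have hunion : coverUnion (D :: CC.erase C) = coverUnion (C₀ :: CC) := by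
      rw [coverUnion_cons, coverUnion_cons, coverUnion_perm hperm, coverUnion_cons, hD,
        Set.union_assoc]
    obtain ⟨T, hT, hTturns⟩ := ih (D :: CC.erase C)
      (by simp only [List.length_cons, List.length_erase_of_mem hC] at hlen ⊢; omega)
      (hunion ▸ hconn)
    have hsum : coverTurns (C₀ :: CC) = C₀.turns + C.turns + coverTurns (CC.erase C) := by
      rw [coverTurns_cons, coverTurns, (hperm.map _).sum_eq, ← coverTurns, coverTurns_cons,
        add_assoc]
    refine ⟨T, hT.trans hunion, ?_⟩
    rw [coverTurns_cons] at hTturns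
    omega

/-- Every cycle has at least 4 turns; consequently a cycle cover of a region
`P` with `t` turns yields a tour of `P` with at most `(3/2)·t` turns. -/
theorem four_turns_and_tour_from_cycle_cover :
    (∀ C : GridCycle, 4 ≤ C.turns) ∧
    ∀ P : Set Pixel, IsRegion P → ∀ CC : List GridCycle, IsCycleCover P CC →
      ∃ C : GridCycle, IsTour P C ∧ 2 * C.turns ≤ 3 * coverTurns CC := by
  refine ⟨GridCycle.four_le_turns, fun P hP CC hCC => ?_⟩
  obtain ⟨-, ⟨p, hp⟩, hconn⟩ := hP
  have hunion : coverUnion CC = P :=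
    Set.Subset.antisymm (fun q ⟨C, hC, hq⟩ => hCC.1 C hC hq) hCC.2
  obtain ⟨C₀, hC₀, -⟩ := hCC.2 p hp
  obtain ⟨n, hn⟩ := Nat.exists_eq_add_one_of_ne_zero (List.length_pos_of_mem hC₀).ne'
  obtain ⟨C, hC, hturns⟩ := exists_cycle_covers_coverUnion n CC hn (hunion ▸ hconn)
  have hfour : 4 * (n + 1) ≤ coverTurns CC := by
    have := List.card_nsmul_le_sum (CC.map GridCycle.turns) 4 (by simp [GridCycle.four_le_turns])
    rwa [List.length_map, hn, smul_eq_mul, mul_comm] at this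
  exact ⟨C, hC.trans hunion, by omega⟩
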